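/- Consider an IIA social choice function on 3 alternatives and n voters given by pairwise functions f^{a>b}, f^{b>c}, f^{c>a} : {-1,1}^n → {-1,1}. If there exist distinct voters i ≠ j with voter i pivotal for f^{a>b} and voter j pivotal for f^{b>c}, then there exists a profile of transitive rankings producing a non-transitive outcome. -/

import Mathlib

/-!
Pivotality of `i` for `f^{a>b}` lets us steer `f^{a>b}` to any prescribed value by choosing
voter `i`'s `a`-vs-`b` bit, and likewise for `j` and `f^{b>c}`. Fix the `c`-vs-`a` vector `z` first
(the negation of the `a`-vs-`b` base vector, except at `i`, where it negates the `b`-vs-`c` bit,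
which `j ≠ i` leaves untouched), then steer both other outcomes to `f^{c>a}(z)`. Every voter's
triple of bits is then non-constant, hence comes from a transitive ranking.
-/

/-- Voter `j` is pivotal for `f` if flipping coordinate `j` can change the value. -/
def Pivotal {n : ℕ} (f : (Fin n → Bool) → Bool) (j : Fin n) : Prop :=
  ∃ x : Fin n → Bool,
    f (Function.update x j true) ≠ f (Function.update x j false)

/-- `x^{a>b}` vector of a profile. -/
def pairVec {n : ℕ} (a b : Fin 3) (σ : Fin n → Equiv.Perm (Fin 3)) : Fin n → Bool :=
  fun i => decide (σ i a < σ i b)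

theorem exists_perm_of_not_cyclic (p q r : Bool) (h : ¬(p = q ∧ q = r)) :
    ∃ τ : Equiv.Perm (Fin 3),
      decide (τ 0 < τ 1) = p ∧ decide (τ 1 < τ 2) = q ∧ decide (τ 2 < τ 0) = r := by
  revert p q r
  decide

theorem exists_profile_pairVec {n : ℕ} (p q r : Fin n → Bool)
    (h : ∀ k, ¬(p k = q k ∧ q k = r k)) :
    ∃ σ : Fin n → Equiv.Perm (Fin 3),
      pairVec 0 1 σ = p ∧ pairVec 1 2 σ = q ∧ pairVec 2 0 σ = r := by
  choose σ hσ using fun k => exists_perm_of_not_cyclic (p k) (q k) (r k) (h k)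
  exact ⟨σ, funext fun k => (hσ k).1, funext fun k => (hσ k).2.1, funext fun k => (hσ k).2.2⟩

theorem exists_update_eq_of_ne {n : ℕ} {f : (Fin n → Bool) → Bool} {x : Fin n → Bool}
    {j : Fin n} (h : f (Function.update x j true) ≠ f (Function.update x j false)) (c : Bool) :
    ∃ s, f (Function.update x j s) = c := by
  by_cases hc : f (Function.update x j true) = c
  · exact ⟨true, hc⟩
  · exact ⟨false, by cases c <;> simp_all⟩

/-- Two pivots imply a paradox, `n` voters: if distinct voters `i ≠ j` are pivotal
for `f^{a>b}` and `f^{b>c}` respectively, some profile of transitive rankings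
produces a non-transitive (cyclic) outcome. -/
theorem stmt_6 (n : ℕ) (fab fbc fca : (Fin n → Bool) → Bool) (i j : Fin n)
    (hij : i ≠ j) (hab : Pivotal fab i) (hbc : Pivotal fbc j) :
    ∃ σ : Fin n → Equiv.Perm (Fin 3),
      fab (pairVec 0 1 σ) = fbc (pairVec 1 2 σ) ∧
      fbc (pairVec 1 2 σ) = fca (pairVec 2 0 σ) := by
  obtain ⟨x, hx⟩ := hab
  obtain ⟨y, hy⟩ := hbc
  set z := Function.update (fun k => !x k) i (!y i)
  obtain ⟨s, hs⟩ := exists_update_eq_of_ne hx (fca z)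
  obtain ⟨t, ht⟩ := exists_update_eq_of_ne hy (fca z)
  have hacyclic : ∀ k, ¬(Function.update x i s k = Function.update y j t k ∧
      Function.update y j t k = z k) := by
    intro k
    by_cases hk : k = i
    · subst hk
      simp [z, hij]
    · simp only [z, Function.update_of_ne hk]
      grind
  obtain ⟨σ, h01, h12, h20⟩ := exists_profile_pairVec _ _ _ hacyclic
  exact ⟨σ, by rw [h01, h12, h20]; exact ⟨hs.trans ht.symm, ht⟩⟩
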